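/- arXiv:2401.05257 — 4 statements merged into one kernel-verified Lean document; each statement's English description precedes it below -/
import Mathlib

section
/- The map ν ↦ ∫_0^T { Q^ν_t f(t) − η ν_t^2 − 2a Q^ν_t ν_t − φ (Q^ν_t)^2 } dt, where Q^ν_t = ∫_0^t ν_u du, is strictly concave on L^2([0,T]): for ζ ≠ ν in L^2 (differing on a set of positive measure) and ρ ∈ (0,1), H(ρζ + (1−ρ)ν) > ρ H(ζ) + (1−ρ) H(ν). -/
open MeasureTheory intervalIntegral

/-!
The objective is a linear functional of `v` minus the quadratic form
`C(v) = ∫ η v² + 2a Q^v v + φ (Q^v)²` (`traderPenalty`), so its concavity defect at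
`ρζ + (1-ρ)ν` is exactly `ρ(1-ρ) C(ζ - ν)`. For `δ = ζ - ν` the cross term integrates to
`a (Q^δ_T)² ≥ 0`, because `Q^δ δ` is a.e. the derivative of the absolutely continuous
function `(Q^δ)²/2`, while `η ∫ δ² > 0` since `ζ ≠ ν` on a set of positive measure.
-/

open Set

open scoped Interval

theorem intervalIntegrable_sub_sq {a b : ℝ} {g h : ℝ → ℝ}
    (hg : IntervalIntegrable g volume a b) (hh : IntervalIntegrable h volume a b)
    (hg2 : IntervalIntegrable (fun t => g t ^ 2) volume a b)
    (hh2 : IntervalIntegrable (fun t => h t ^ 2) volume a b) :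
    IntervalIntegrable (fun t => (g t - h t) ^ 2) volume a b := by
  rw [intervalIntegrable_iff] at *
  have hgL := (memLp_two_iff_integrable_sq hg.aestronglyMeasurable).2 hg2
  have hhL := (memLp_two_iff_integrable_sq hh.aestronglyMeasurable).2 hh2
  exact (memLp_two_iff_integrable_sq (hg.aestronglyMeasurable.sub hh.aestronglyMeasurable)).1
    (hgL.sub hhL)

theorem IntervalIntegrable.primitive_mul {a b : ℝ} {g h : ℝ → ℝ}
    (hg : IntervalIntegrable g volume a b) (hh : IntervalIntegrable h volume a b) :
    IntervalIntegrable (fun t => (∫ u in a..t, g u) * h t) volume a b :=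
  hh.continuousOn_mul (continuousOn_primitive_interval' hg left_mem_uIcc)

theorem IntervalIntegrable.primitive_sq {a b : ℝ} {g : ℝ → ℝ}
    (hg : IntervalIntegrable g volume a b) :
    IntervalIntegrable (fun t => (∫ u in a..t, g u) ^ 2) volume a b :=
  ((continuousOn_primitive_interval' hg left_mem_uIcc).pow 2).intervalIntegrable

theorem integral_primitive_mul_self {a b : ℝ} {g : ℝ → ℝ}
    (hg : IntervalIntegrable g volume a b) :
    ∫ t in a..b, (∫ u in a..t, g u) * g t = (∫ u in a..b, g u) ^ 2 / 2 := by
  set Q : ℝ → ℝ := fun x => ∫ u in a..x, g u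
  have hQ := hg.absolutelyContinuousOnInterval_intervalIntegral left_mem_uIcc
  have hderiv : ∀ᵐ x, x ∈ Ι a b → deriv Q x = g x := by
    filter_upwards [hg.ae_hasDerivAt_integral] with x hx hxab
    exact (hx (uIoc_subset_uIcc hxab) a left_mem_uIcc).deriv
  have hsq : ∫ t in a..b, deriv Q t * Q t + Q t * deriv Q t = ∫ t in a..b, 2 * (Q t * g t) :=
    integral_congr_ae (by filter_upwards [hderiv] with x hx hxab; rw [hx hxab]; ring)
  rw [hQ.integral_deriv_mul_eq_sub hQ, intervalIntegral.integral_const_mul] at hsq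
  simp only [Q, intervalIntegral.integral_same, mul_zero, sub_zero] at hsq
  linarith

theorem integral_sq_pos_of_volume_support_pos {a b : ℝ} {g : ℝ → ℝ}
    (hg2 : IntervalIntegrable (fun t => g t ^ 2) volume a b)
    (hg : 0 < volume {t ∈ Ioc a b | g t ≠ 0}) :
    0 < ∫ t in a..b, g t ^ 2 := by
  have hab : a < b := by
    by_contra! hba
    simp [Ioc_eq_empty hba.not_gt] at hg
  rw [integral_pos_iff_support_of_nonneg_ae (ae_of_all _ fun t => sq_nonneg (g t)) hg2]
  refine ⟨hab, hg.trans_le (measure_mono fun t ⟨htI, ht⟩ => ⟨?_, htI⟩)⟩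
  simpa [Function.mem_support] using ht

section TraderObjective

variable (η a φ : ℝ)

noncomputable def traderIntegrand (f v : ℝ → ℝ) (t : ℝ) : ℝ :=
  (∫ u in (0:ℝ)..t, v u) * f t - η * (v t) ^ 2
    - 2 * a * (∫ u in (0:ℝ)..t, v u) * v t
    - φ * (∫ u in (0:ℝ)..t, v u) ^ 2

noncomputable def traderPenalty (δ : ℝ → ℝ) (t : ℝ) : ℝ :=
  η * δ t ^ 2 + 2 * a * ((∫ u in (0:ℝ)..t, δ u) * δ t) + φ * (∫ u in (0:ℝ)..t, δ u) ^ 2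

variable {T : ℝ}

theorem intervalIntegrable_traderIntegrand {f v : ℝ → ℝ}
    (hf : IntervalIntegrable f volume 0 T)
    (hv : IntervalIntegrable v volume 0 T)
    (hv2 : IntervalIntegrable (fun t => v t ^ 2) volume 0 T) :
    IntervalIntegrable (traderIntegrand η a φ f v) volume 0 T := by
  have hvv := (hv.primitive_mul hv).const_mul (2 * a)
  simp only [← mul_assoc] at hvv
  exact (((hv.primitive_mul hf).sub (hv2.const_mul η)).sub hvv).sub (hv.primitive_sq.const_mul φ)

theorem intervalIntegrable_traderPenalty {δ : ℝ → ℝ} (hδ : IntervalIntegrable δ volume 0 T)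
    (hδ2 : IntervalIntegrable (fun t => δ t ^ 2) volume 0 T) :
    IntervalIntegrable (traderPenalty η a φ δ) volume 0 T := by
  exact ((hδ2.const_mul η).add ((hδ.primitive_mul hδ).const_mul (2 * a))).add
    (hδ.primitive_sq.const_mul φ)

variable {η a φ}

theorem traderIntegrand_convex_combination {f ζ ν : ℝ → ℝ} {t : ℝ}
    (hζ : IntervalIntegrable ζ volume 0 t) (hν : IntervalIntegrable ν volume 0 t) (ρ : ℝ) :
    traderIntegrand η a φ f (fun s => ρ * ζ s + (1 - ρ) * ν s) t
      = ρ * traderIntegrand η a φ f ζ t + (1 - ρ) * traderIntegrand η a φ f ν t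
        + ρ * (1 - ρ) * traderPenalty η a φ (fun s => ζ s - ν s) t := by
  have hQm : ∫ u in (0:ℝ)..t, ρ * ζ u + (1 - ρ) * ν u
      = ρ * (∫ u in (0:ℝ)..t, ζ u) + (1 - ρ) * ∫ u in (0:ℝ)..t, ν u := by
    rw [intervalIntegral.integral_add (hζ.const_mul ρ) (hν.const_mul (1 - ρ))]
    simp only [intervalIntegral.integral_const_mul]
  simp only [traderIntegrand, traderPenalty, hQm, intervalIntegral.integral_sub hζ hν]
  ring

theorem integral_traderIntegrand_convex_combination {f ζ ν : ℝ → ℝ}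
    (hf : IntervalIntegrable f volume 0 T)
    (hζ : IntervalIntegrable ζ volume 0 T) (hν : IntervalIntegrable ν volume 0 T)
    (hζ2 : IntervalIntegrable (fun t => ζ t ^ 2) volume 0 T)
    (hν2 : IntervalIntegrable (fun t => ν t ^ 2) volume 0 T) (ρ : ℝ) :
    ∫ t in (0:ℝ)..T, traderIntegrand η a φ f (fun s => ρ * ζ s + (1 - ρ) * ν s) t
      = ρ * (∫ t in (0:ℝ)..T, traderIntegrand η a φ f ζ t)
        + (1 - ρ) * (∫ t in (0:ℝ)..T, traderIntegrand η a φ f ν t)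
        + ρ * (1 - ρ) * ∫ t in (0:ℝ)..T, traderPenalty η a φ (fun s => ζ s - ν s) t := by
  have hpoint : EqOn (traderIntegrand η a φ f (fun s => ρ * ζ s + (1 - ρ) * ν s))
      (fun t => ρ * traderIntegrand η a φ f ζ t + (1 - ρ) * traderIntegrand η a φ f ν t
        + ρ * (1 - ρ) * traderPenalty η a φ (fun s => ζ s - ν s) t) (uIcc 0 T) := fun t ht =>
    have hsub : uIcc 0 t ⊆ uIcc 0 T := uIcc_subset_uIcc left_mem_uIcc ht
    traderIntegrand_convex_combination (hζ.mono_set hsub) (hν.mono_set hsub) ρ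
  have hIζ := (intervalIntegrable_traderIntegrand η a φ hf hζ hζ2).const_mul ρ
  have hIν := (intervalIntegrable_traderIntegrand η a φ hf hν hν2).const_mul (1 - ρ)
  have hP := (intervalIntegrable_traderPenalty η a φ (hζ.sub hν)
    (intervalIntegrable_sub_sq hζ hν hζ2 hν2)).const_mul (ρ * (1 - ρ))
  rw [intervalIntegral.integral_congr hpoint, intervalIntegral.integral_add (hIζ.add hIν) hP,
    intervalIntegral.integral_add hIζ hIν]
  simp only [intervalIntegral.integral_const_mul]

theorem integral_traderPenalty {δ : ℝ → ℝ} (hδ : IntervalIntegrable δ volume 0 T)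
    (hδ2 : IntervalIntegrable (fun t => δ t ^ 2) volume 0 T) :
    ∫ t in (0:ℝ)..T, traderPenalty η a φ δ t
      = η * (∫ t in (0:ℝ)..T, δ t ^ 2) + a * (∫ t in (0:ℝ)..T, δ t) ^ 2
        + φ * ∫ t in (0:ℝ)..T, (∫ u in (0:ℝ)..t, δ u) ^ 2 := by
  have hδδ := (hδ.primitive_mul hδ).const_mul (2 * a)
  unfold traderPenalty
  rw [    intervalIntegral.integral_add ((hδ2.const_mul η).add hδδ) (hδ.primitive_sq.const_mul φ),
    intervalIntegral.integral_add (hδ2.const_mul η) hδδ]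
  simp only [intervalIntegral.integral_const_mul, integral_primitive_mul_self hδ]
  ring

theorem integral_traderPenalty_pos (hT : 0 ≤ T) (hη : 0 < η) (ha : 0 ≤ a) (hφ : 0 ≤ φ)
    {δ : ℝ → ℝ} (hδ : IntervalIntegrable δ volume 0 T)
    (hδ2 : IntervalIntegrable (fun t => δ t ^ 2) volume 0 T)
    (hpos : 0 < ∫ t in (0:ℝ)..T, δ t ^ 2) :
    0 < ∫ t in (0:ℝ)..T, traderPenalty η a φ δ t := by
  have hQ2 : 0 ≤ ∫ t in (0:ℝ)..T, (∫ u in (0:ℝ)..t, δ u) ^ 2 :=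
    intervalIntegral.integral_nonneg hT fun t _ => sq_nonneg _
  rw [integral_traderPenalty hδ hδ2]
  positivity

end TraderObjective

/-- Strict concavity of the informed trader's (pathwise) objective
`H(ν) = ∫_0^T { Q^ν_t f(t) − η ν_t² − 2a Q^ν_t ν_t − φ (Q^ν_t)² } dt`
on L²([0,T]): for ζ, ν differing on a set of positive measure and ρ ∈ (0,1),
`H(ρζ + (1−ρ)ν) > ρ H(ζ) + (1−ρ) H(ν)`. -/
theorem stmt_1 (T η a φ : ℝ) (hT : 0 < T) (hη : 0 < η) (ha : 0 < a) (hφ : 0 < φ)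
    (f : ℝ → ℝ) (hf : IntervalIntegrable f volume 0 T)
    (H : (ℝ → ℝ) → ℝ)
    (hH : ∀ v : ℝ → ℝ, H v =
      ∫ t in (0:ℝ)..T,
        ((∫ u in (0:ℝ)..t, v u) * f t - η * (v t) ^ 2
          - 2 * a * (∫ u in (0:ℝ)..t, v u) * v t
          - φ * (∫ u in (0:ℝ)..t, v u) ^ 2))
    (ζ ν : ℝ → ℝ)
    (hζ : IntervalIntegrable ζ volume 0 T)
    (hν : IntervalIntegrable ν volume 0 T)
    (hζ2 : IntervalIntegrable (fun t => (ζ t) ^ 2) volume 0 T)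
    (hν2 : IntervalIntegrable (fun t => (ν t) ^ 2) volume 0 T)
    (hdiff : 0 < volume {t ∈ Set.Ioc 0 T | ζ t ≠ ν t})
    (ρ : ℝ) (hρ : ρ ∈ Set.Ioo (0:ℝ) 1) :
    ρ * H ζ + (1 - ρ) * H ν < H (fun t => ρ * ζ t + (1 - ρ) * ν t) := by
  obtain ⟨hρ0, hρ1⟩ := hρ
  have hH' : ∀ v, H v = ∫ t in (0:ℝ)..T, traderIntegrand η a φ f v t := hH
  have hδ2 := intervalIntegrable_sub_sq hζ hν hζ2 hν2
  have hδ2pos : 0 < ∫ t in (0:ℝ)..T, (ζ t - ν t) ^ 2 :=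
    integral_sq_pos_of_volume_support_pos hδ2 (by simpa only [sub_ne_zero] using hdiff)
  have hdefect :
      0 < ρ * (1 - ρ) * ∫ t in (0:ℝ)..T, traderPenalty η a φ (fun s => ζ s - ν s) t :=
    mul_pos (mul_pos hρ0 (sub_pos.2 hρ1))
      (integral_traderPenalty_pos hT.le hη ha.le hφ.le (hζ.sub hν) hδ2 hδ2pos)
  rw [hH', hH', hH', integral_traderIntegrand_convex_combination hf hζ hν hζ2 hν2]
  linarith
end

section
/- With L = [[Q, −Y],[0, −U]] ∈ ℝ^{4×4} block matrix built from U = [[1,−1],[0,1]], Y = [[0, b/(2η_B)],[b/(2η_I), 0]], Q = diag(−φ_B/η_B, −φ̄/η_I): if 0 ≤ b and b ≤ 2η_B, b ≤ 2η_I, b ≤ 4φ_B, b ≤ 4φ̄, then L + Lᵀ is negative semidefinite, i.e. x (L + Lᵀ) xᵀ ≤ 0 for all x ∈ ℝ^4. -/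
open Matrix

/-- With `L = [[Q, −Y],[0, −U]]` built from the broker–mean-field matrices:
if `0 ≤ b` and `b ≤ 2η_B`, `b ≤ 2η_I`, `b ≤ 4φ_B`, `b ≤ 4φ̄`, then `L + Lᵀ` is
negative semidefinite: `x ⬝ (L + Lᵀ) x ≤ 0` for all `x ∈ ℝ⁴`. -/
theorem stmt_13 (b ηB ηI φB φbar : ℝ)
    (hηB : 0 < ηB) (hηI : 0 < ηI) (hφB : 0 < φB) (hφbar : 0 < φbar)
    (hb0 : 0 ≤ b) (hb1 : b ≤ 2 * ηB) (hb2 : b ≤ 2 * ηI)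
    (hb3 : b ≤ 4 * φB) (hb4 : b ≤ 4 * φbar)
    (U Y Q : Matrix (Fin 2) (Fin 2) ℝ)
    (hU : U = !![1, -1; 0, 1])
    (hY : Y = !![0, b / (2 * ηB); b / (2 * ηI), 0])
    (hQ : Q = !![-(φB / ηB), 0; 0, -(φbar / ηI)])
    (L : Matrix (Fin 4) (Fin 4) ℝ)
    (hL : L = Matrix.reindex finSumFinEquiv finSumFinEquiv
      (Matrix.fromBlocks Q (-Y) 0 (-U))) :
    ∀ x : Fin 4 → ℝ, x ⬝ᵥ (L + Lᵀ).mulVec x ≤ 0 := by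
  intro x
  have hL' : L = !![-(φB/ηB), 0, 0, -(b/(2*ηB));
                    0, -(φbar/ηI), -(b/(2*ηI)), 0;
                    0, 0, -1, 1;
                    0, 0, 0, -1] := by
    subst hL hU hY hQ
    ext i j
    fin_cases i <;> fin_cases j <;>
      norm_num [Matrix.fromBlocks, finSumFinEquiv, Fin.addCases, Matrix.submatrix,
        Fin.castLT, Fin.subNat, Matrix.vecHead, Matrix.vecTail]
  subst hL'
  simp only [dotProduct, mulVec, Matrix.add_apply, Matrix.transpose_apply,
    Fin.sum_univ_four, Matrix.of_apply, Matrix.cons_val', Matrix.cons_val_zero,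
    Matrix.cons_val_one, Matrix.head_cons, Matrix.head_fin_const, Matrix.cons_val_fin_one,
    Matrix.empty_val', Matrix.cons_val_two, Matrix.cons_val_three,
    Matrix.vecHead, Matrix.vecTail, Function.comp, Matrix.cons_val_succ]
  have c0 : 0 ≤ b / (2 * ηB) := by positivity
  have d0 : 0 ≤ b / (2 * ηI) := by positivity
  have hc1 : b / (2 * ηB) ≤ 1 := by rw [div_le_one (by positivity)]; linarith
  have hd1 : b / (2 * ηI) ≤ 1 := by rw [div_le_one (by positivity)]; linarith
  have hA : b / (2 * ηB) ≤ 2 * (φB / ηB) := by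
    rw [mul_div_assoc', div_le_div_iff₀ (by positivity) (by positivity)]; nlinarith
  have hB : b / (2 * ηI) ≤ 2 * (φbar / ηI) := by
    rw [mul_div_assoc', div_le_div_iff₀ (by positivity) (by positivity)]; nlinarith
  nlinarith [mul_nonneg c0 (sq_nonneg (x 0 + x 3)), mul_nonneg d0 (sq_nonneg (x 1 + x 2)),
    sq_nonneg (x 2 - x 3),
    mul_nonneg (sub_nonneg.2 hc1) (sq_nonneg (x 3)),
    mul_nonneg (sub_nonneg.2 hd1) (sq_nonneg (x 2)),
    mul_nonneg (sub_nonneg.2 hA) (sq_nonneg (x 0)),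
    mul_nonneg (sub_nonneg.2 hB) (sq_nonneg (x 1))]
end

section
/- Consider the deterministic ansatz verification: suppose g^a, g^b, g^c, h^a, h^b, h^c are C¹ functions solving the six ODEs of the equilibrium system (with the stated terminal conditions), α is a C¹ function solving α' = −k^α α, and define ν̄(t) = g^a α + g^b Q̄ + g^c Q̄^B, ν^B(t) = h^a α + h^b Q̄ + h^c Q̄^B where Q̄' = ν̄, (Q̄^B)' = ν^B − ν̄ with Q̄(0) = Q̄^B(0) = 0. Then ν̄ and ν^B satisfy the coupled forward-backward ODEs −2η_I ν̄' = b ν^B + α − 2φ̄ Q̄ and −2η_B (ν^B)' = b ν̄ + α − 2φ_B Q̄^B on [0,T], with 2η_I ν̄(T) = −2ā Q̄(T) and 2η_B ν^B(T) = −(2a_B − b) Q̄^B(T). -/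
/-!
Write `X = (α, Q̄, Q̄^B)`. Then `X' = M X` with
`M = [[-k^α, 0, 0], [g^a, g^b, g^c], [h^a - g^a, h^b - g^b, h^c - g^c]]`, and the six ODEs say
exactly that the rows `g = (g^a, g^b, g^c)` and `h = (h^a, h^b, h^c)` solve the adjoint
equation `p' = -p M - c`, with forcing `c` read off from the inhomogeneous terms. For such `p`
the product rule gives `(p ⬝ X)' = -c ⬝ X`, which for `ν̄ = g ⬝ X` and `ν^B = h ⬝ X` are the
two forward-backward equations. The terminal conditions are the values of `g` and `h` at `T`.
-/

open Matrix

section Adjoint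

variable {𝕜 ι : Type*} [NontriviallyNormedField 𝕜] [Fintype ι]
  {p X : 𝕜 → ι → 𝕜} {p' X' : ι → 𝕜} {s : Set 𝕜} {x : 𝕜}

theorem HasDerivWithinAt.dotProduct (hp : HasDerivWithinAt p p' s x)
    (hX : HasDerivWithinAt X X' s x) :
    HasDerivWithinAt (fun t => p t ⬝ᵥ X t) (p' ⬝ᵥ X x + p x ⬝ᵥ X') s x := by
  rw [hasDerivWithinAt_pi] at hp hX
  have h := HasDerivWithinAt.fun_sum (u := Finset.univ) fun i _ => (hp i).fun_mul (hX i)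
  rw [Finset.sum_add_distrib] at h
  exact h

theorem HasDerivWithinAt.dotProduct_of_adjoint {M : 𝕜 → Matrix ι ι 𝕜} {c : ι → 𝕜}
    (hp : HasDerivWithinAt p (-(p x ᵥ* M x) - c) s x)
    (hX : HasDerivWithinAt X (M x *ᵥ X x) s x) :
    HasDerivWithinAt (fun t => p t ⬝ᵥ X t) (-(c ⬝ᵥ X x)) s x := by
  refine (hp.dotProduct hX).congr_deriv ?_
  rw [dotProduct_mulVec, sub_dotProduct, neg_dotProduct]
  ring

end Adjoint

theorem HasDerivWithinAt.vec3 {𝕜 E : Type*} [NontriviallyNormedField 𝕜]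
    [NormedAddCommGroup E] [NormedSpace 𝕜 E] {f g h : 𝕜 → E} {f' g' h' : E} {s : Set 𝕜} {x : 𝕜}
    (hf : HasDerivWithinAt f f' s x) (hg : HasDerivWithinAt g g' s x)
    (hh : HasDerivWithinAt h h' s x) :
    HasDerivWithinAt (fun t => ![f t, g t, h t]) ![f', g', h'] s x :=
  hf.finCons <| hg.finCons <| hh.finCons <|
    (hasDerivWithinAt_const x s ![]).congr_deriv (Subsingleton.elim _ _)

/-- Deterministic verification of the linear ansatz for the mean-field FBSDE
system: if `g^a, g^b, g^c, h^a, h^b, h^c` solve the six equilibrium ODEs with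
their terminal conditions, `α' = −k^α α`, and
`ν̄ = g^a α + g^b Q̄ + g^c Q̄^B`, `ν^B = h^a α + h^b Q̄ + h^c Q̄^B` with
`Q̄' = ν̄`, `(Q̄^B)' = ν^B − ν̄`, `Q̄(0) = Q̄^B(0) = 0`, then
`−2η_I ν̄' = b ν^B + α − 2φ̄ Q̄` and `−2η_B (ν^B)' = b ν̄ + α − 2φ_B Q̄^B` on
`[0,T]`, with `2η_I ν̄(T) = −2ā Q̄(T)` and `2η_B ν^B(T) = −(2a_B − b) Q̄^B(T)`. -/
theorem stmt_18 (T b kα ηI ηB φbar φB abar aB : ℝ)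
    (hb : 0 < b) (hηI : 0 < ηI) (hηB : 0 < ηB)
    (ga gb gc ha hb hc : ℝ → ℝ)
    (hga : ∀ t ∈ Set.Icc (0:ℝ) T, HasDerivWithinAt ga
      (-(-kα * ga t + gb t * ga t + gc t * (ha t - ga t) + (b * ha t + 1) / (2 * ηI)))
      (Set.Icc 0 T) t)
    (hha : ∀ t ∈ Set.Icc (0:ℝ) T, HasDerivWithinAt ha
      (-(-kα * ha t + hb t * ga t + hc t * (ha t - ga t) + (b * ga t + 1) / (2 * ηB)))
      (Set.Icc 0 T) t)
    (hgb : ∀ t ∈ Set.Icc (0:ℝ) T, HasDerivWithinAt gb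
      (-((gb t) ^ 2 + gc t * (hb t - gb t) + (b * hb t - 2 * φbar) / (2 * ηI)))
      (Set.Icc 0 T) t)
    (hhb : ∀ t ∈ Set.Icc (0:ℝ) T, HasDerivWithinAt hb
      (-(hb t * gb t + hc t * (hb t - gb t) + b * gb t / (2 * ηB)))
      (Set.Icc 0 T) t)
    (hgc : ∀ t ∈ Set.Icc (0:ℝ) T, HasDerivWithinAt gc
      (-(gb t * gc t + gc t * (hc t - gc t) + b * hc t / (2 * ηI)))
      (Set.Icc 0 T) t)
    (hhc : ∀ t ∈ Set.Icc (0:ℝ) T, HasDerivWithinAt hc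
      (-(hb t * gc t + hc t * (hc t - gc t) + (b * gc t - 2 * φB) / (2 * ηB)))
      (Set.Icc 0 T) t)
    (hgaT : ga T = 0) (hhaT : ha T = 0) (hgcT : gc T = 0) (hhbT : hb T = 0)
    (hgbT : gb T = -abar / ηI) (hhcT : hc T = -(2 * aB - b) / (2 * ηB))
    (α : ℝ → ℝ)
    (hα : ∀ t ∈ Set.Icc (0:ℝ) T, HasDerivWithinAt α (-kα * α t) (Set.Icc 0 T) t)
    (Qbar QB νbar νB : ℝ → ℝ)
    (hνbar : ∀ t, νbar t = ga t * α t + gb t * Qbar t + gc t * QB t)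
    (hνB : ∀ t, νB t = ha t * α t + hb t * Qbar t + hc t * QB t)
    (hQbar : ∀ t ∈ Set.Icc (0:ℝ) T, HasDerivWithinAt Qbar (νbar t) (Set.Icc 0 T) t)
    (hQB : ∀ t ∈ Set.Icc (0:ℝ) T, HasDerivWithinAt QB (νB t - νbar t) (Set.Icc 0 T) t) :
    (∀ t ∈ Set.Icc (0:ℝ) T, HasDerivWithinAt νbar
        (-((b * νB t + α t - 2 * φbar * Qbar t) / (2 * ηI))) (Set.Icc 0 T) t) ∧
    (∀ t ∈ Set.Icc (0:ℝ) T, HasDerivWithinAt νB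
        (-((b * νbar t + α t - 2 * φB * QB t) / (2 * ηB))) (Set.Icc 0 T) t) ∧
    2 * ηI * νbar T = -2 * abar * Qbar T ∧
    2 * ηB * νB T = -(2 * aB - b) * QB T := by
  let M : ℝ → Matrix (Fin 3) (Fin 3) ℝ := fun t =>
    !![-kα, 0, 0; ga t, gb t, gc t; ha t - ga t, hb t - gb t, hc t - gc t]
  have hX : ∀ t ∈ Set.Icc (0:ℝ) T, HasDerivWithinAt (fun t => ![α t, Qbar t, QB t])
      (M t *ᵥ ![α t, Qbar t, QB t]) (Set.Icc 0 T) t := fun t ht =>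
    ((hα t ht).vec3 (hQbar t ht) (hQB t ht)).congr_deriv <| by
      ext i; fin_cases i <;> simp [M, mulVec, hνbar, hνB] <;> ring
  refine ⟨fun t ht => ?_, fun t ht => ?_, ?_, ?_⟩
  · have hg : HasDerivWithinAt (fun t => ![ga t, gb t, gc t]) (-(![ga t, gb t, gc t] ᵥ* M t) -
        (2 * ηI)⁻¹ • ![b * ha t + 1, b * hb t - 2 * φbar, b * hc t]) (Set.Icc 0 T) t :=
      ((hga t ht).vec3 (hgb t ht) (hgc t ht)).congr_deriv <| by
        ext i; fin_cases i <;> simp [M] <;> ring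
    have hν : (fun t => ![ga t, gb t, gc t] ⬝ᵥ ![α t, Qbar t, QB t]) = νbar :=
      funext fun t => by rw [vec3_dotProduct', hνbar]
    refine hν ▸ (hg.dotProduct_of_adjoint (hX t ht)).congr_deriv ?_
    rw [smul_dotProduct, vec3_dotProduct', hνB, smul_eq_mul]
    ring
  · have hh : HasDerivWithinAt (fun t => ![ha t, hb t, hc t]) (-(![ha t, hb t, hc t] ᵥ* M t) -
        (2 * ηB)⁻¹ • ![b * ga t + 1, b * gb t, b * gc t - 2 * φB]) (Set.Icc 0 T) t :=
      ((hha t ht).vec3 (hhb t ht) (hhc t ht)).congr_deriv <| by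
        ext i; fin_cases i <;> simp [M] <;> ring
    have hν : (fun t => ![ha t, hb t, hc t] ⬝ᵥ ![α t, Qbar t, QB t]) = νB :=
      funext fun t => by rw [vec3_dotProduct', hνB]
    refine hν ▸ (hh.dotProduct_of_adjoint (hX t ht)).congr_deriv ?_
    rw [smul_dotProduct, vec3_dotProduct', hνbar, smul_eq_mul]
    ring
  · rw [hνbar T, hgaT, hgbT, hgcT]
    field_simp
    ring
  · rw [hνB T, hhaT, hhbT, hhcT]
    field_simp
    ring
end

section
/- Deterministic individual-trader ansatz verification: given C¹ functions f^a, f^{a,I}, f^b, f^{b,I}, f^c solving the ODE system (13)–(17) of the paper with terminal conditions f^a(T)=f^{a,I}(T)=f^b(T)=f^c(T)=0, f^{b,I}(T)=−a_I/η_I, and given solutions α' = −k^α α, (α^I)' = −k^I α^I, and the equilibrium aggregates ν̄, ν^B, Q̄, Q̄^B as above, define ν^I = f^a α + f^{a,I} α^I + f^b Q̄ + f^{b,I} Q^I + f^c Q̄^B with (Q^I)' = ν^I, Q^I(0)=0. Then −2η_I (ν^I)' = b ν^B + α^I + α − 2φ_I Q^I on [0,T] and 2η_I ν^I(T) = −2a_I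 Q^I(T). -/
/-- Deterministic verification of the individual informed trader's ansatz: if
`f^a, f^{a,I}, f^b, f^{b,I}, f^c` solve the ODE system (13)–(17) with their
terminal conditions, `α' = −k^α α`, `(α^I)' = −k^I α^I`, the equilibrium
aggregates satisfy `ν̄ = g^a α + g^b Q̄ + g^c Q̄^B`,
`ν^B = h^a α + h^b Q̄ + h^c Q̄^B`, `Q̄' = ν̄`, `(Q̄^B)' = ν^B − ν̄`, and
`ν^I = f^a α + f^{a,I} α^I + f^b Q̄ + f^{b,I} Q^I + f^c Q̄^B` with `(Q^I)' = ν^I`,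
`Q^I(0) = 0`, then `−2η_I (ν^I)' = b ν^B + α^I + α − 2φ_I Q^I` on `[0,T]` and
`2η_I ν^I(T) = −2a_I Q^I(T)`. -/
theorem stmt_19 (T b kα kI ηI φI aI : ℝ)
    (hb : 0 < b) (hηI : 0 < ηI)
    (ga gb gc ha hb hc : ℝ → ℝ)
    (fa faI fb fbI fc : ℝ → ℝ)
    (hfa : ∀ t ∈ Set.Icc (0:ℝ) T, HasDerivWithinAt fa
      (-(-kα * fa t + fb t * ga t + fbI t * fa t + fc t * (ha t - ga t)
          + (b * ha t + 1) / (2 * ηI))) (Set.Icc 0 T) t)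
    (hfaI : ∀ t ∈ Set.Icc (0:ℝ) T, HasDerivWithinAt faI
      (-(-kI * faI t + fbI t * faI t + 1 / (2 * ηI))) (Set.Icc 0 T) t)
    (hfb : ∀ t ∈ Set.Icc (0:ℝ) T, HasDerivWithinAt fb
      (-(fb t * gb t + fbI t * fb t + fc t * (hb t - gb t) + b * hb t / (2 * ηI)))
      (Set.Icc 0 T) t)
    (hfbI : ∀ t ∈ Set.Icc (0:ℝ) T, HasDerivWithinAt fbI
      (-((fbI t) ^ 2 - φI / ηI)) (Set.Icc 0 T) t)
    (hfc : ∀ t ∈ Set.Icc (0:ℝ) T, HasDerivWithinAt fc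
      (-(fb t * gc t + fbI t * fc t + fc t * (hc t - gc t) + b * hc t / (2 * ηI)))
      (Set.Icc 0 T) t)
    (hfaT : fa T = 0) (hfaIT : faI T = 0) (hfbT : fb T = 0) (hfcT : fc T = 0)
    (hfbIT : fbI T = -aI / ηI)
    (α αI : ℝ → ℝ)
    (hα : ∀ t ∈ Set.Icc (0:ℝ) T, HasDerivWithinAt α (-kα * α t) (Set.Icc 0 T) t)
    (hαI : ∀ t ∈ Set.Icc (0:ℝ) T, HasDerivWithinAt αI (-kI * αI t) (Set.Icc 0 T) t)
    (Qbar QB QI νbar νB νI : ℝ → ℝ)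
    (hνbar : ∀ t, νbar t = ga t * α t + gb t * Qbar t + gc t * QB t)
    (hνB : ∀ t, νB t = ha t * α t + hb t * Qbar t + hc t * QB t)
    (hQbar : ∀ t ∈ Set.Icc (0:ℝ) T, HasDerivWithinAt Qbar (νbar t) (Set.Icc 0 T) t)
    (hQB : ∀ t ∈ Set.Icc (0:ℝ) T, HasDerivWithinAt QB (νB t - νbar t) (Set.Icc 0 T) t)
    (hνI : ∀ t, νI t = fa t * α t + faI t * αI t + fb t * Qbar t
        + fbI t * QI t + fc t * QB t)
    (hQI : ∀ t ∈ Set.Icc (0:ℝ) T, HasDerivWithinAt QI (νI t) (Set.Icc 0 T) t) :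
    (∀ t ∈ Set.Icc (0:ℝ) T, HasDerivWithinAt νI
        (-((b * νB t + αI t + α t - 2 * φI * QI t) / (2 * ηI))) (Set.Icc 0 T) t) ∧
    2 * ηI * νI T = -2 * aI * QI T := by
  refine ⟨fun t ht => ?_, ?_⟩
  · have hsum := (((((hfa t ht).mul (hα t ht)).add ((hfaI t ht).mul (hαI t ht))).add
      ((hfb t ht).mul (hQbar t ht))).add ((hfbI t ht).mul (hQI t ht))).add
      ((hfc t ht).mul (hQB t ht))
    rw [show νI = _ from funext hνI]
    refine hsum.congr_deriv ?_
    -- The `f^{b,I} f^x` terms of the ODEs cancel `f^{b,I} (Q^I)' = f^{b,I} ν^I`, and the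
    -- `g`/`h` terms cancel the contributions of `Q̄' = ν̄` and `(Q̄^B)' = ν^B − ν̄`.
    rw [hνI t, hνbar t, hνB t]
    ring
  · rw [hνI T, hfaT, hfaIT, hfbT, hfcT, hfbIT]
    field_simp
    ring
end
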